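/- Let α ∈ (0,1) and β = 1−α. Let X_1, …, X_m (m ≥ 3) be i.i.d. random variables on a probability space with P(X_i = 1) = α and P(X_i = 0) = β. For i ∈ {1, …, m−1} define K_i = 1 if (X_i, X_{i+1}) = (0,1) and K_i = 0 otherwise, and let K = Σ_{i=1}^{m−1} K_i. Then for every δ with 0 < δ < 1, P( |K − αβ(m−1)| > δ αβ(m−1) ) ≤ 4 · exp( −δ² αβ (m−1) / 6 ). -/

import Mathlib

open MeasureTheory ProbabilityTheory Real Finset

/-!
Write `K` as the sum of the indicators of the events `Aᵢ = {Xᵢ = 0, Xᵢ₊₁ = 1}`. Events whose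
indices have the same parity involve disjoint pairs of the `Xⱼ`, so they are independent, and the
odd and even partial sums `K₁`, `K₀` satisfy `E e^{t Kᵣ} ≤ exp ((eᵗ - 1) αβ nᵣ)`, where the
`nᵣ = #{i ≤ m - 1 | i ≡ r mod 2}` lie between `(m - 2) / 2` and `m / 2`. By convexity of `exp`,
`E e^{t K / 2} ≤ (E e^{t K₀} + E e^{t K₁}) / 2`, so `K / 2` satisfies the moment bound of a Poisson
variable of mean `αβ m / 2` (for `t ≥ 0`) or `αβ (m - 2) / 2` (for `t ≤ 0`). The multiplicative
Chernoff bound then bounds each tail by `e^{αβδ/2} exp (-δ²αβ(m - 1)/6) ≤ 2 exp (-δ²αβ(m - 1)/6)`.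
-/

namespace Real

lemma two_mul_div_add_two_le_log_one_add {a : ℝ} (ha : 0 ≤ a) :
    2 * a / (a + 2) ≤ log (1 + a) := by
  simpa [mul_div_assoc] using le_hasSum (hasSum_log_one_add ha) 0 fun k _ => by positivity

lemma add_sq_div_three_le_one_add_mul_log_one_add {δ : ℝ} (h0 : 0 ≤ δ) (h1 : δ ≤ 1) :
    δ + δ ^ 2 / 3 ≤ (1 + δ) * log (1 + δ) := by
  have hlog := two_mul_div_add_two_le_log_one_add h0
  rw [div_le_iff₀ (by linarith)] at hlog
  nlinarith [mul_nonneg (mul_nonneg h0 h0) (sub_nonneg.2 h1)]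

/- `(1 - δ) - (1 - δ)⁻¹ = 2 sinh (log (1 - δ)) ≤ 2 log (1 - δ)`, as `sinh u ≤ u` for `u ≤ 0`. -/
lemma sq_div_two_sub_le_one_sub_mul_log_one_sub {δ : ℝ} (h0 : 0 ≤ δ) (h1 : δ < 1) :
    δ ^ 2 / 2 - δ ≤ (1 - δ) * log (1 - δ) := by
  have hpos : 0 < 1 - δ := by linarith
  have h := sinh_le_self_iff.2 (log_nonpos hpos.le (by linarith))
  rw [sinh_eq, exp_neg, exp_log hpos, div_le_iff₀ two_pos] at h
  have := mul_le_mul_of_nonneg_left h hpos.le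
  rw [mul_sub, mul_inv_cancel₀ hpos.ne'] at this
  nlinarith

lemma exp_le_two {x : ℝ} (hx : x ≤ 1 / 2) : exp x ≤ 2 :=
  calc exp x ≤ exp (1 / 2) := exp_le_exp.2 hx
    _ ≤ 1 / (1 - 1 / 2) := exp_bound_div_one_sub_of_interval (by norm_num) (by norm_num)
    _ = 2 := by norm_num

lemma exp_mul_add_div_two_le (t x y : ℝ) :
    exp (t * ((x + y) / 2)) ≤ (exp (t * x) + exp (t * y)) / 2 := by
  have hx : exp (t * x) = exp (t * x / 2) ^ 2 := by rw [sq, ← exp_add]; ring_nf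
  have hy : exp (t * y) = exp (t * y / 2) ^ 2 := by rw [sq, ← exp_add]; ring_nf
  have hxy : exp (t * ((x + y) / 2)) = exp (t * x / 2) * exp (t * y / 2) := by
    rw [← exp_add]; ring_nf
  rw [hx, hy, hxy]
  nlinarith [sq_nonneg (exp (t * x / 2) - exp (t * y / 2))]

end Real

namespace ProbabilityTheory

variable {Ω : Type*} [MeasurableSpace Ω] {μ : Measure Ω} {t : ℝ}

lemma iIndepFun.measure_biInter_preimage_inter_preimage {ι κ β : Type*} [MeasurableSpace β]
    {f : ι → Ω → β} (h : iIndepFun f μ) {a b : κ → ι}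
    (hab : Function.Injective (Sum.elim a b)) {s t : Set β} (hs : MeasurableSet s)
    (ht : MeasurableSet t) (J : Finset κ) :
    μ (⋂ j ∈ J, f (a j) ⁻¹' s ∩ f (b j) ⁻¹' t) =
      ∏ j ∈ J, μ (f (a j) ⁻¹' s) * μ (f (b j) ⁻¹' t) := by
  have := (h.precomp hab).meas_biInter (S := J.disjSum J)
    (s := fun x => f (Sum.elim a b x) ⁻¹' Sum.elim (fun _ => s) (fun _ => t) x)
    fun x _ => ⟨_, by cases x <;> assumption, rfl⟩
  simp only [prod_disjSum, Sum.elim_inl, Sum.elim_inr, ← prod_mul_distrib] at this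
  rw [← this]
  congr 1
  ext ω
  simp [forall_and]

lemma iIndepFun.iIndepSet_preimage_inter_preimage {ι κ β : Type*} [MeasurableSpace β]
    {f : ι → Ω → β} (hf : ∀ i, Measurable (f i)) (h : iIndepFun f μ) {a b : κ → ι}
    (hab : Function.Injective (Sum.elim a b)) {s t : Set β} (hs : MeasurableSet s)
    (ht : MeasurableSet t) :
    iIndepSet (fun j => f (a j) ⁻¹' s ∩ f (b j) ⁻¹' t) μ := by
  rw [iIndepSet_iff_meas_biInter fun j => (hf _ hs).inter (hf _ ht)]
  intro J
  rw [h.measure_biInter_preimage_inter_preimage hab hs ht]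
  refine prod_congr rfl fun j _ => ?_
  simpa using (h.measure_biInter_preimage_inter_preimage hab hs ht {j}).symm

lemma integrable_exp_mul_indicator_one [IsFiniteMeasure μ] {A : Set Ω} (hA : MeasurableSet A) :
    Integrable (fun ω => exp (t * A.indicator 1 ω)) μ :=
  integrable_exp_mul_of_mem_Icc (a := 0) (b := 1) (measurable_one.indicator hA).aemeasurable
    (ae_of_all _ fun ω => by by_cases hω : ω ∈ A <;> simp [hω])

lemma mgf_indicator_one [IsProbabilityMeasure μ] {A : Set Ω} (hA : MeasurableSet A) :
    mgf (A.indicator 1) μ t = 1 + (exp t - 1) * μ.real A := by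
  have h : (fun ω => exp (t * A.indicator 1 ω)) =
      fun ω => A.indicator (fun _ => exp t - 1) ω + 1 := by
    ext ω
    by_cases hω : ω ∈ A <;> simp [hω]
  rw [mgf, h, integral_add ((integrable_const _).indicator hA) (integrable_const 1),
    integral_indicator_const _ hA]
  simp [mul_comm, add_comm]

lemma mgf_indicator_one_le [IsProbabilityMeasure μ] {A : Set Ω} (hA : MeasurableSet A) :
    mgf (A.indicator 1) μ t ≤ exp ((exp t - 1) * μ.real A) := by
  rw [mgf_indicator_one hA]
  linarith [add_one_le_exp ((exp t - 1) * μ.real A)]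

section IndependentEvents

variable {κ : Type*} {A : κ → Set Ω}

lemma iIndepSet.integrable_exp_mul_sum_indicator_one (hA : ∀ j, MeasurableSet (A j))
    (h : iIndepSet A μ) (J : Finset κ) :
    Integrable (fun ω => exp (t * (∑ j ∈ J, (A j).indicator 1) ω)) μ :=
  have := h.isProbabilityMeasure
  h.iIndepFun_indicator.integrable_exp_mul_sum (fun j => measurable_one.indicator (hA j))
    fun j _ => integrable_exp_mul_indicator_one (hA j)

lemma iIndepSet.mgf_sum_indicator_one_le (hA : ∀ j, MeasurableSet (A j)) (h : iIndepSet A μ)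
    (J : Finset κ) :
    mgf (∑ j ∈ J, (A j).indicator 1) μ t ≤
      exp ((exp t - 1) * ∑ j ∈ J, μ.real (A j)) := by
  have := h.isProbabilityMeasure
  have hind : iIndepFun (fun j => (A j).indicator (1 : Ω → ℝ)) μ := h.iIndepFun_indicator
  rw [hind.mgf_sum (fun j => measurable_one.indicator (hA j)), mul_sum, exp_sum]
  exact prod_le_prod (fun _ _ => mgf_nonneg) fun j _ => mgf_indicator_one_le (hA j)

end IndependentEvents

section Midpoint

variable {X Y : Ω → ℝ}

lemma integrable_exp_mul_add_div_two (hX : AEMeasurable X μ) (hY : AEMeasurable Y μ)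
    (hXi : Integrable (fun ω => exp (t * X ω)) μ)
    (hYi : Integrable (fun ω => exp (t * Y ω)) μ) :
    Integrable (fun ω => exp (t * ((X ω + Y ω) / 2))) μ :=
  ((hXi.add hYi).div_const 2).mono' (aemeasurable_exp_mul t ((hX.add hY).div_const 2))
    (ae_of_all _ fun ω => by
      rw [norm_of_nonneg (exp_pos _).le]
      exact exp_mul_add_div_two_le t (X ω) (Y ω))

lemma mgf_add_div_two_le (hXi : Integrable (fun ω => exp (t * X ω)) μ)
    (hYi : Integrable (fun ω => exp (t * Y ω)) μ) :
    mgf (fun ω => (X ω + Y ω) / 2) μ t ≤ (mgf X μ t + mgf Y μ t) / 2 := by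
  rw [mgf, mgf, mgf, ← integral_add hXi hYi, ← integral_div]
  exact integral_mono_of_nonneg (ae_of_all _ fun ω => (exp_pos _).le)
    ((hXi.add hYi).div_const 2) (ae_of_all _ fun ω => exp_mul_add_div_two_le t (X ω) (Y ω))

end Midpoint

section Chernoff

variable [IsFiniteMeasure μ] {Y : Ω → ℝ} {a ν δ : ℝ}

lemma measureReal_ge_le_of_mgf_log_one_add_le (ha : 0 ≤ a) (hδ0 : 0 ≤ δ) (hδ1 : δ ≤ 1)
    (hint : Integrable (fun ω => exp (log (1 + δ) * Y ω)) μ)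
    (hmgf : mgf Y μ (log (1 + δ)) ≤ exp (ν * δ)) :
    μ.real {ω | (1 + δ) * a ≤ Y ω} ≤ exp ((ν - a) * δ - a * δ ^ 2 / 3) :=
  calc μ.real {ω | (1 + δ) * a ≤ Y ω}
      ≤ exp (-log (1 + δ) * ((1 + δ) * a)) * mgf Y μ (log (1 + δ)) :=
        measure_ge_le_exp_mul_mgf _ (log_nonneg (by linarith)) hint
    _ ≤ exp (-log (1 + δ) * ((1 + δ) * a)) * exp (ν * δ) := by gcongr
    _ ≤ exp ((ν - a) * δ - a * δ ^ 2 / 3) := by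
        rw [← exp_add]
        gcongr
        nlinarith [add_sq_div_three_le_one_add_mul_log_one_add hδ0 hδ1]

lemma measureReal_le_le_of_mgf_log_one_sub_le (ha : 0 ≤ a) (hδ0 : 0 ≤ δ) (hδ1 : δ < 1)
    (hint : Integrable (fun ω => exp (log (1 - δ) * Y ω)) μ)
    (hmgf : mgf Y μ (log (1 - δ)) ≤ exp (-(ν * δ))) :
    μ.real {ω | Y ω ≤ (1 - δ) * a} ≤ exp ((a - ν) * δ - a * δ ^ 2 / 2) :=
  calc μ.real {ω | Y ω ≤ (1 - δ) * a}
      ≤ exp (-log (1 - δ) * ((1 - δ) * a)) * mgf Y μ (log (1 - δ)) :=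
        measure_le_le_exp_mul_mgf _ (log_nonpos (by linarith) (by linarith)) hint
    _ ≤ exp (-log (1 - δ) * ((1 - δ) * a)) * exp (-(ν * δ)) := by gcongr
    _ ≤ exp ((a - ν) * δ - a * δ ^ 2 / 2) := by
        rw [← exp_add]
        gcongr
        nlinarith [sq_div_two_sub_le_one_sub_mul_log_one_sub hδ0 hδ1]

lemma measure_abs_sub_gt_mul_le {c B : ℝ} (hup : μ.real {ω | (1 + δ) * c ≤ Y ω} ≤ B)
    (hlow : μ.real {ω | Y ω ≤ (1 - δ) * c} ≤ B) :
    μ {ω | |Y ω - c| > δ * c} ≤ ENNReal.ofReal (2 * B) := by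
  have hB : 0 ≤ B := measureReal_nonneg.trans hup
  have hsub : {ω | |Y ω - c| > δ * c} ⊆
      {ω | (1 + δ) * c ≤ Y ω} ∪ {ω | Y ω ≤ (1 - δ) * c} := by
    intro ω hω
    rw [Set.mem_ofPred_eq, gt_iff_lt, lt_abs] at hω
    rw [Set.mem_union, Set.mem_ofPred_eq, Set.mem_ofPred_eq]
    rcases hω with h | h
    · left; linarith
    · right; linarith
  calc μ {ω | |Y ω - c| > δ * c}
      ≤ μ {ω | (1 + δ) * c ≤ Y ω} + μ {ω | Y ω ≤ (1 - δ) * c} :=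
        (measure_mono hsub).trans (measure_union_le _ _)
    _ ≤ ENNReal.ofReal B + ENNReal.ofReal B := by
        gcongr
        · rw [← ofReal_measureReal]; exact ENNReal.ofReal_le_ofReal hup
        · rw [← ofReal_measureReal]; exact ENNReal.ofReal_le_ofReal hlow
    _ = ENNReal.ofReal (2 * B) := by rw [← ENNReal.ofReal_add hB hB, two_mul]

end Chernoff

end ProbabilityTheory

def parityClass (n r : ℕ) : Finset ℕ := {i ∈ Icc 1 n | i % 2 = r}

lemma mem_parityClass {n r i : ℕ} :
    i ∈ parityClass n r ↔ 1 ≤ i ∧ i ≤ n ∧ i % 2 = r := by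
  simp [parityClass, and_assoc]

lemma parityClass_subset {n r : ℕ} : parityClass n r ⊆ Icc 1 n := filter_subset _ _

lemma sum_parityClass_zero_add_sum_parityClass_one {M : Type*} [AddCommMonoid M] (n : ℕ)
    (g : ℕ → M) :
    ∑ i ∈ parityClass n 0, g i + ∑ i ∈ parityClass n 1, g i = ∑ i ∈ Icc 1 n, g i := by
  rw [← sum_filter_add_sum_filter_not (Icc 1 n) (fun i => i % 2 = 0)]
  congr 2
  exact filter_congr fun i _ => by omega

/- A parity class and its translate by one are disjoint subsets of `[1, n + 1]`. -/
lemma two_mul_card_parityClass_le (n r : ℕ) : 2 * #(parityClass n r) ≤ n + 1 := by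
  have hdisj : Disjoint (parityClass n r) ((parityClass n r).map (addRightEmbedding 1)) := by
    simp only [disjoint_left, mem_map, mem_parityClass, addRightEmbedding_apply]
    rintro i hi ⟨j, hj, rfl⟩
    omega
  have hsub :
      parityClass n r ∪ (parityClass n r).map (addRightEmbedding 1) ⊆ Icc 1 (n + 1) := by
    intro i
    simp only [mem_union, mem_map, mem_parityClass, addRightEmbedding_apply, mem_Icc]
    rintro (hi | ⟨j, hj, rfl⟩) <;> omega
  have := card_le_card hsub
  rw [card_union_of_disjoint hdisj, card_map, Nat.card_Icc] at this
  omega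

lemma card_parityClass_le (n r : ℕ) : (#(parityClass n r) : ℝ) ≤ (n + 1) / 2 := by
  have : (2 * #(parityClass n r) : ℝ) ≤ n + 1 := by
    exact_mod_cast two_mul_card_parityClass_le n r
  linarith

lemma le_card_parityClass (n : ℕ) {r : ℕ} (hr : r < 2) :
    ((n : ℝ) - 1) / 2 ≤ #(parityClass n r) := by
  have hcard : (#(parityClass n 0) + #(parityClass n 1) : ℝ) = n := by
    simpa using sum_parityClass_zero_add_sum_parityClass_one n fun _ => (1 : ℝ)
  interval_cases r <;> linarith [card_parityClass_le n 0, card_parityClass_le n 1]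

section PairEvents

variable {Ω : Type*} [MeasurableSpace Ω] {P : Measure Ω} {m : ℕ} {X : ℕ → Ω → ℝ} {p δ : ℝ}

def pairEvent (X : ℕ → Ω → ℝ) (i : ℕ) : Set Ω := X i ⁻¹' {0} ∩ X (i + 1) ⁻¹' {1}

noncomputable def pairCount (X : ℕ → Ω → ℝ) (n : ℕ) (ω : Ω) : ℝ :=
  ∑ i ∈ Icc 1 n, (pairEvent X i).indicator 1 ω

lemma measurableSet_pairEvent (hmeas : ∀ i, Measurable (X i)) (i : ℕ) :
    MeasurableSet (pairEvent X i) :=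
  (hmeas i (measurableSet_singleton 0)).inter (hmeas (i + 1) (measurableSet_singleton 1))

lemma measureReal_pairEvent (hindep : iIndepFun (fun i : Fin m => X (i + 1)) P) {i : ℕ}
    (hi : i ∈ Icc 1 (m - 1)) :
    P.real (pairEvent X i) = P.real {ω | X i ω = 0} * P.real {ω | X (i + 1) ω = 1} := by
  rw [mem_Icc] at hi
  have h := hindep.indepFun (i := ⟨i - 1, by omega⟩) (j := ⟨i, by omega⟩)
    (by simp [Fin.ext_iff]; omega)
  simp only [Nat.sub_add_cancel hi.1] at h
  simp only [measureReal_def, pairEvent, ENNReal.toReal_mul, h.measure_inter_preimage_eq_mul _ _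
    (measurableSet_singleton 0) (measurableSet_singleton 1)]
  rfl

lemma iIndepSet_pairEvent (hmeas : ∀ i, Measurable (X i))
    (hindep : iIndepFun (fun i : Fin m => X (i + 1)) P) (r : ℕ) :
    iIndepSet (fun i : parityClass (m - 1) r => pairEvent X i) P := by
  have hmem (i : parityClass (m - 1) r) := mem_parityClass.1 i.2
  let a (i : parityClass (m - 1) r) : Fin m := ⟨i - 1, by have := hmem i; omega⟩
  let b (i : parityClass (m - 1) r) : Fin m := ⟨i, by have := hmem i; omega⟩
  have hab : Function.Injective (Sum.elim a b) := by
    rintro (i | i) (j | j) h <;>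
      simp only [Sum.elim_inl, Sum.elim_inr, Fin.ext_iff, a, b, Sum.inl.injEq, Sum.inr.injEq,
        reduceCtorEq, Subtype.ext_iff] at h ⊢ <;>
      have := hmem i <;> have := hmem j <;> omega
  convert hindep.iIndepSet_preimage_inter_preimage (fun i : Fin m => hmeas (i + 1)) hab
    (measurableSet_singleton 0) (measurableSet_singleton 1) using 2 with i
  simp [pairEvent, a, b, Nat.sub_add_cancel (hmem i).1]

lemma integrable_exp_mul_sum_pairEvent (hmeas : ∀ i, Measurable (X i))
    (hindep : iIndepFun (fun i : Fin m => X (i + 1)) P) (r : ℕ) (t : ℝ) :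
    Integrable
      (fun ω => exp (t * ∑ i ∈ parityClass (m - 1) r, (pairEvent X i).indicator 1 ω)) P := by
  have h := (iIndepSet_pairEvent hmeas hindep r).integrable_exp_mul_sum_indicator_one
    (fun i : parityClass (m - 1) r => measurableSet_pairEvent hmeas i) univ (t := t)
  have hsum (ω : Ω) := sum_coe_sort (parityClass (m - 1) r)
    fun i => (pairEvent X i).indicator (1 : Ω → ℝ) ω
  simpa only [Finset.sum_apply, hsum] using h

lemma mgf_sum_pairEvent_le (hmeas : ∀ i, Measurable (X i))
    (hindep : iIndepFun (fun i : Fin m => X (i + 1)) P)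
    (hp : ∀ i ∈ Icc 1 (m - 1), P.real (pairEvent X i) = p) (r : ℕ) (t : ℝ) :
    mgf (fun ω => ∑ i ∈ parityClass (m - 1) r, (pairEvent X i).indicator 1 ω) P t ≤
      exp ((exp t - 1) * (#(parityClass (m - 1) r) * p)) := by
  have h := (iIndepSet_pairEvent hmeas hindep r).mgf_sum_indicator_one_le
    (fun i : parityClass (m - 1) r => measurableSet_pairEvent hmeas i) univ (t := t)
  have hsum (ω : Ω) := sum_coe_sort (parityClass (m - 1) r)
    fun i => (pairEvent X i).indicator (1 : Ω → ℝ) ω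
  simp only [Finset.sum_fn, hsum] at h
  rwa [sum_coe_sort (parityClass (m - 1) r) fun i => P.real (pairEvent X i),
    sum_congr rfl fun i hi => hp i (parityClass_subset hi), sum_const, nsmul_eq_mul] at h

lemma integrable_exp_mul_pairCount_div_two (hmeas : ∀ i, Measurable (X i))
    (hindep : iIndepFun (fun i : Fin m => X (i + 1)) P) (t : ℝ) :
    Integrable (fun ω => exp (t * (pairCount X (m - 1) ω / 2))) P := by
  have hS (r : ℕ) : Measurable fun ω =>
      ∑ i ∈ parityClass (m - 1) r, (pairEvent X i).indicator (1 : Ω → ℝ) ω :=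
    measurable_sum _ fun i _ => measurable_one.indicator (measurableSet_pairEvent hmeas i)
  simp only [pairCount, ← sum_parityClass_zero_add_sum_parityClass_one]
  exact integrable_exp_mul_add_div_two (hS 0).aemeasurable (hS 1).aemeasurable
    (integrable_exp_mul_sum_pairEvent hmeas hindep 0 t)
    (integrable_exp_mul_sum_pairEvent hmeas hindep 1 t)

lemma mgf_pairCount_div_two_le (hmeas : ∀ i, Measurable (X i))
    (hindep : iIndepFun (fun i : Fin m => X (i + 1)) P)
    (hp : ∀ i ∈ Icc 1 (m - 1), P.real (pairEvent X i) = p) (t : ℝ) :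
    mgf (fun ω => pairCount X (m - 1) ω / 2) P t ≤
      (exp ((exp t - 1) * (#(parityClass (m - 1) 0) * p)) +
        exp ((exp t - 1) * (#(parityClass (m - 1) 1) * p))) / 2 := by
  simp only [pairCount, ← sum_parityClass_zero_add_sum_parityClass_one]
  refine (mgf_add_div_two_le (integrable_exp_mul_sum_pairEvent hmeas hindep 0 t)
    (integrable_exp_mul_sum_pairEvent hmeas hindep 1 t)).trans ?_
  gcongr <;> exact mgf_sum_pairEvent_le hmeas hindep hp _ t

lemma measureReal_pairCount_ge_le (hmeas : ∀ i, Measurable (X i))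
    (hindep : iIndepFun (fun i : Fin m => X (i + 1)) P)
    (hp : ∀ i ∈ Icc 1 (m - 1), P.real (pairEvent X i) = p) (hp0 : 0 ≤ p) (hp1 : p ≤ 1)
    (hδ0 : 0 ≤ δ) (hδ1 : δ ≤ 1) :
    P.real {ω | (1 + δ) * (p * (m - 1 : ℕ)) ≤ pairCount X (m - 1) ω} ≤
      2 * exp (-δ ^ 2 * p * (m - 1 : ℕ) / 6) := by
  have := hindep.isProbabilityMeasure
  set n := m - 1
  have hmgf :
      mgf (fun ω => pairCount X n ω / 2) P (log (1 + δ)) ≤ exp (p * (n + 1) / 2 * δ) := by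
    refine (mgf_pairCount_div_two_le hmeas hindep hp _).trans ?_
    rw [exp_log (by linarith), add_sub_cancel_left]
    have (r : ℕ) : exp (δ * (#(parityClass n r) * p)) ≤ exp (p * (n + 1) / 2 * δ) :=
      exp_le_exp.2 (by
        linarith [mul_le_mul_of_nonneg_left (card_parityClass_le n r) (mul_nonneg hδ0 hp0)])
    linarith [this 0, this 1]
  have hset : {ω | (1 + δ) * (p * n) ≤ pairCount X n ω} =
      {ω | (1 + δ) * (p * n / 2) ≤ pairCount X n ω / 2} := by
    ext ω
    simp only [Set.mem_ofPred_eq]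
    constructor <;> intro h <;> linarith
  rw [hset]
  refine (measureReal_ge_le_of_mgf_log_one_add_le (by positivity) hδ0 hδ1
    (integrable_exp_mul_pairCount_div_two hmeas hindep _) hmgf).trans ?_
  rw [show (p * (n + 1) / 2 - p * n / 2) * δ - p * n / 2 * δ ^ 2 / 3 =
    p * δ / 2 + -δ ^ 2 * p * n / 6 by ring, exp_add]
  gcongr
  exact exp_le_two (by nlinarith)

lemma measureReal_pairCount_le_le (hmeas : ∀ i, Measurable (X i))
    (hindep : iIndepFun (fun i : Fin m => X (i + 1)) P)
    (hp : ∀ i ∈ Icc 1 (m - 1), P.real (pairEvent X i) = p) (hp0 : 0 ≤ p) (hp1 : p ≤ 1)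
    (hδ0 : 0 ≤ δ) (hδ1 : δ < 1) :
    P.real {ω | pairCount X (m - 1) ω ≤ (1 - δ) * (p * (m - 1 : ℕ))} ≤
      2 * exp (-δ ^ 2 * p * (m - 1 : ℕ) / 6) := by
  have := hindep.isProbabilityMeasure
  set n := m - 1
  have hmgf : mgf (fun ω => pairCount X n ω / 2) P (log (1 - δ)) ≤
      exp (-(p * (n - 1) / 2 * δ)) := by
    refine (mgf_pairCount_div_two_le hmeas hindep hp _).trans ?_
    rw [exp_log (by linarith), sub_sub_cancel_left]
    have (r : ℕ) (hr : r < 2) :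
        exp (-δ * (#(parityClass n r) * p)) ≤ exp (-(p * (n - 1) / 2 * δ)) :=
      exp_le_exp.2 (by
        linarith [mul_le_mul_of_nonneg_left (le_card_parityClass n hr) (mul_nonneg hδ0 hp0)])
    linarith [this 0 (by norm_num), this 1 (by norm_num)]
  have hset : {ω | pairCount X n ω ≤ (1 - δ) * (p * n)} =
      {ω | pairCount X n ω / 2 ≤ (1 - δ) * (p * n / 2)} := by
    ext ω
    simp only [Set.mem_ofPred_eq]
    constructor <;> intro h <;> linarith
  rw [hset]
  refine (measureReal_le_le_of_mgf_log_one_sub_le (by positivity) hδ0 hδ1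
    (integrable_exp_mul_pairCount_div_two hmeas hindep _) hmgf).trans ?_
  rw [show (p * n / 2 - p * (n - 1) / 2) * δ - p * n / 2 * δ ^ 2 / 2 =
    p * δ / 2 + -δ ^ 2 * p * n / 4 by ring, exp_add]
  have : 0 ≤ δ ^ 2 * p * n := by positivity
  exact mul_le_mul (exp_le_two (by nlinarith)) (exp_le_exp.2 (by linarith)) (exp_pos _).le
    zero_le_two

end PairEvents

/-- Concentration of the number `K` of (honest, selfish) key-block pairs among `m` i.i.d.
key blocks (`X i = 1` selfish w.p. `α`, `X i = 0` honest w.p. `β = 1-α`):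
`P(|K - αβ(m-1)| > δαβ(m-1)) ≤ 4·exp(-δ²αβ(m-1)/6)`. -/
theorem stmt2 {Ω : Type*} [MeasurableSpace Ω] (P : Measure Ω) [IsProbabilityMeasure P]
    (α β : ℝ) (hα0 : 0 < α) (hα1 : α < 1) (hβ : β = 1 - α)
    (m : ℕ) (hm : 3 ≤ m)
    (X : ℕ → Ω → ℝ) (hmeas : ∀ i, Measurable (X i))
    (hindep : iIndepFun
      (fun i : Fin m => X (i + 1)) P)
    (h1 : ∀ i ∈ Finset.Icc 1 m, P {ω | X i ω = 1} = ENNReal.ofReal α)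
    (h0 : ∀ i ∈ Finset.Icc 1 m, P {ω | X i ω = 0} = ENNReal.ofReal β)
    (K : Ω → ℝ)
    (hK : ∀ ω, K ω = ∑ i ∈ Finset.Icc 1 (m - 1),
      if X i ω = 0 ∧ X (i + 1) ω = 1 then (1 : ℝ) else 0)
    (δ : ℝ) (hδ0 : 0 < δ) (hδ1 : δ < 1) :
    P {ω | |K ω - α * β * ((m : ℝ) - 1)| > δ * (α * β * ((m : ℝ) - 1))}
      ≤ ENNReal.ofReal (4 * exp (-δ ^ 2 * α * β * ((m : ℝ) - 1) / 6)) := by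
  have hβ0 : 0 < β := by linarith
  have hm1 : ((m - 1 : ℕ) : ℝ) = (m : ℝ) - 1 := by rw [Nat.cast_sub (by omega), Nat.cast_one]
  have hKeq : K = pairCount X (m - 1) := by
    ext ω
    classical
    simp only [hK, pairCount, pairEvent, Set.indicator_apply, Set.mem_inter_iff,
      Set.mem_preimage, Set.mem_singleton_iff, Pi.one_apply]
  have hp : ∀ i ∈ Icc 1 (m - 1), P.real (pairEvent X i) = α * β := by
    intro i hi
    have hi' := mem_Icc.1 hi
    rw [measureReal_pairEvent hindep hi, measureReal_def, measureReal_def, h0 i (by simp; omega),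
      h1 (i + 1) (by simp; omega), ENNReal.toReal_ofReal hβ0.le, ENNReal.toReal_ofReal hα0.le,
      mul_comm]
  have hp1 : α * β ≤ 1 := by nlinarith
  have hupper := measureReal_pairCount_ge_le hmeas hindep hp (by positivity) hp1 hδ0.le hδ1.le
  have hlower := measureReal_pairCount_le_le hmeas hindep hp (by positivity) hp1 hδ0.le hδ1
  rw [hm1, ← hKeq, ← mul_assoc (-δ ^ 2) α β] at hupper hlower
  refine (measure_abs_sub_gt_mul_le hupper hlower).trans_eq ?_
  ring_nf
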